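/- arXiv:1607.07749 — 4 statements merged into one kernel-verified Lean document; each statement's English description precedes it below -/
import Mathlib

section
/- Symmetry of the second geometric divided difference: let f be a function from positive reals to positive reals and let x₀, x₁, x₂ > 0 have pairwise distinct logarithms. With first geometric divided differences f(xᵢ,xⱼ) = (f(xⱼ)/f(xᵢ))^{1/(ln xⱼ − ln xᵢ)}, the second geometric divided difference satisfies ( f(x₁,x₂)/f(x₀,x₁) )^{1/(ln x₂ − ln x₀)} = f(x₀)^{1/((ln x₀ − ln x₁)(ln x₀ − ln x₂))} · f(x₁)^{1/((ln x₁ − ln x₀)(ln x₁ − ln x₂))} · f(x₂)^{1/((ln x₂ − ln x₀)(ln x₂ − ln x₁))}; in particular it is symmetric in x₀, x₁, x₂. -/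
/-!
Taking logarithms turns the geometric divided differences of `f` at `xᵢ` into the ordinary
divided differences of `log ∘ f ∘ exp` at the nodes `log xᵢ`, so the identity is the classical
symmetric formula for an ordinary second divided difference.
-/

noncomputable def gDD₁ (f : ℝ → ℝ) (a b : ℝ) : ℝ :=
  (f b / f a) ^ (1 / (Real.log b - Real.log a))

theorem second_divided_difference_eq_sum {K : Type*} [Field K] {u₀ u₁ u₂ : K}
    (h01 : u₀ ≠ u₁) (h02 : u₀ ≠ u₂) (h12 : u₁ ≠ u₂) (g₀ g₁ g₂ : K) :
    ((g₂ - g₁) / (u₂ - u₁) - (g₁ - g₀) / (u₁ - u₀)) / (u₂ - u₀)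
      = g₀ / ((u₀ - u₁) * (u₀ - u₂)) + g₁ / ((u₁ - u₀) * (u₁ - u₂))
        + g₂ / ((u₂ - u₀) * (u₂ - u₁)) := by
  have d01 := sub_ne_zero.mpr h01
  have d02 := sub_ne_zero.mpr h02
  have d12 := sub_ne_zero.mpr h12
  have d10 := sub_ne_zero.mpr h01.symm
  have d20 := sub_ne_zero.mpr h02.symm
  have d21 := sub_ne_zero.mpr h12.symm
  field_simp
  ring

section gDD₁

variable {f : ℝ → ℝ} {a b : ℝ}

theorem gDD₁_pos (ha : 0 < f a) (hb : 0 < f b) : 0 < gDD₁ f a b :=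
  Real.rpow_pos_of_pos (div_pos hb ha) _

theorem log_gDD₁ (ha : 0 < f a) (hb : 0 < f b) :
    Real.log (gDD₁ f a b) = (Real.log (f b) - Real.log (f a)) / (Real.log b - Real.log a) := by
  rw [gDD₁, Real.log_rpow (div_pos hb ha), Real.log_div hb.ne' ha.ne', one_div_mul_eq_div]

end gDD₁

/-- Symmetry of the second geometric divided difference: at arguments `x₀, x₁, x₂`
with pairwise distinct logarithms, the second geometric divided difference equals
the symmetric product
`∏ᵢ f xᵢ ^ (1 / ∏_{j≠i} (ln xᵢ - ln xⱼ))`. -/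
theorem second_geometric_divided_difference_symmetric
    (f : ℝ → ℝ) (hf : ∀ t : ℝ, 0 < t → 0 < f t)
    (x₀ x₁ x₂ : ℝ) (h₀ : 0 < x₀) (h₁ : 0 < x₁) (h₂ : 0 < x₂)
    (h01 : Real.log x₀ ≠ Real.log x₁) (h02 : Real.log x₀ ≠ Real.log x₂)
    (h12 : Real.log x₁ ≠ Real.log x₂) :
    (gDD₁ f x₁ x₂ / gDD₁ f x₀ x₁) ^ (1 / (Real.log x₂ - Real.log x₀))
      = f x₀ ^ (1 / ((Real.log x₀ - Real.log x₁) * (Real.log x₀ - Real.log x₂)))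
        * f x₁ ^ (1 / ((Real.log x₁ - Real.log x₀) * (Real.log x₁ - Real.log x₂)))
        * f x₂ ^ (1 / ((Real.log x₂ - Real.log x₀) * (Real.log x₂ - Real.log x₁))) := by
  have hf₀ := hf x₀ h₀
  have hf₁ := hf x₁ h₁
  have hf₂ := hf x₂ h₂
  have hg₀₁ := gDD₁_pos hf₀ hf₁
  have hg₁₂ := gDD₁_pos hf₁ hf₂
  refine Real.log_injOn_pos (Real.rpow_pos_of_pos (div_pos hg₁₂ hg₀₁) _)
    (Set.mem_Ioi.mpr (by positivity)) ?_
  rw [Real.log_rpow (div_pos hg₁₂ hg₀₁), Real.log_div hg₁₂.ne' hg₀₁.ne',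
    log_gDD₁ hf₀ hf₁, log_gDD₁ hf₁ hf₂, Real.log_mul (by positivity) (by positivity),
    Real.log_mul (by positivity) (by positivity), Real.log_rpow hf₀, Real.log_rpow hf₁,
    Real.log_rpow hf₂, one_div_mul_eq_div,
    second_divided_difference_eq_sum h01 h02 h12]
  ring
end

section
/- Symmetric product formula for geometric divided differences: let f be a function from positive reals to positive reals and let x₀, x₁, …, x_n > 0 have pairwise distinct logarithms. Define the geometric divided differences recursively by D(xᵢ) = f(xᵢ) and D(x_i,…,x_{i+k}) = ( D(x_{i+1},…,x_{i+k}) / D(x_i,…,x_{i+k−1}) )^{1/(ln x_{i+k} − ln x_i)}. Then D(x₀,…,x_n) = ∏_{i=0}^{n} f(x_i)^{ 1 / ∏_{j ≠ i} (ln x_i − ln x_j) }; in particular the n-th geometric divided difference is symmetric in all its arguments. -/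
/-! Taking logarithms turns the geometric divided difference of `f` at the nodes `xᵢ` into the
ordinary divided difference of the values `log (f xᵢ)` at the nodes `log xᵢ`, so it suffices to
prove the classical formula `[y₀,…,yₙ; g] = ∑ᵢ gᵢ / ∏_{j ≠ i} (yᵢ - yⱼ)` and exponentiate.
That formula follows by induction: removing a node `a` from a node set multiplies the `i`-th
summand by `yᵢ - y_a`, so the formulas for the node set without its first node and without its
last node differ by `(y_last - y_first)` times the formula for the whole set, which is exactly
the recursion of divided differences. -/

/-- The `n`-th geometric divided difference of `f` at nodes `x 0, …, x n`, defined
recursively by `D(xᵢ) = f xᵢ` and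
`D(x_i,…,x_{i+k}) = (D(x_{i+1},…,x_{i+k}) / D(x_i,…,x_{i+k-1})) ^ (1/(ln x_{i+k} - ln x_i))`. -/
noncomputable def gDD (f : ℝ → ℝ) : ℕ → (ℕ → ℝ) → ℝ
  | 0, x => f (x 0)
  | n + 1, x =>
      (gDD f n (fun i => x (i + 1)) / gDD f n x) ^
        (1 / (Real.log (x (n + 1)) - Real.log (x 0)))

open Finset

section DividedDifference

variable {K : Type*} [Field K]

def divDiff : ℕ → (ℕ → K) → (ℕ → K) → K
  | 0, _, g => g 0
  | n + 1, y, g =>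
      (divDiff n (fun i => y (i + 1)) (fun i => g (i + 1)) - divDiff n y g) / (y (n + 1) - y 0)

variable {ι : Type*} [DecidableEq ι]

def symmDivDiff (s : Finset ι) (y g : ι → K) : K :=
  ∑ i ∈ s, g i / ∏ j ∈ s.erase i, (y i - y j)

theorem symmDivDiff_erase (s : Finset ι) (y g : ι → K) {a : ι} (ha : a ∈ s)
    (hy : ∀ i ∈ s, i ≠ a → y i ≠ y a) :
    symmDivDiff (s.erase a) y g = ∑ i ∈ s, g i * (y i - y a) / ∏ j ∈ s.erase i, (y i - y j) := by
  rw [symmDivDiff, ← sum_erase_add _ _ ha, sub_self, mul_zero, zero_div, add_zero]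
  refine sum_congr rfl fun i hi => ?_
  obtain ⟨hia, his⟩ := mem_erase.mp hi
  rw [← prod_erase_mul _ _ (mem_erase.mpr ⟨Ne.symm hia, ha⟩), erase_right_comm,
    mul_div_mul_right _ _ (sub_ne_zero.mpr (hy i his hia))]

theorem symmDivDiff_erase_sub_symmDivDiff_erase (s : Finset ι) (y g : ι → K)
    (hy : Set.InjOn y s) {a b : ι} (ha : a ∈ s) (hb : b ∈ s) :
    symmDivDiff (s.erase a) y g - symmDivDiff (s.erase b) y g = (y b - y a) * symmDivDiff s y g := by
  have hne : ∀ c ∈ s, ∀ i ∈ s, i ≠ c → y i ≠ y c := fun c hc i hi hic h => hic (hy hi hc h)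
  rw [symmDivDiff_erase s y g ha (hne a ha), symmDivDiff_erase s y g hb (hne b hb), symmDivDiff,
    ← sum_sub_distrib, mul_sum]
  refine sum_congr rfl fun i _ => ?_
  ring

theorem divDiff_shift_eq_symmDivDiff (y g : ℕ → K) (n k : ℕ)
    (hy : Set.InjOn y (Ico k (k + n + 1))) :
    divDiff n (fun i => y (k + i)) (fun i => g (k + i)) = symmDivDiff (Ico k (k + n + 1)) y g := by
  induction n generalizing k with
  | zero => simp [divDiff, symmDivDiff]
  | succ n ih =>
    set s := Ico k (k + (n + 1) + 1)
    have hupper : Ico (k + 1) (k + 1 + n + 1) = s.erase k := by ext; simp [s]; omega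
    have hlower : Ico k (k + n + 1) = s.erase (k + n + 1) := by ext; simp [s]; omega
    have hk : k ∈ s := by simp [s]
    have hkn : k + n + 1 ∈ s := by simp [s]; omega
    have hshift : ∀ h : ℕ → K, (fun i => h (k + (i + 1))) = fun i => h (k + 1 + i) :=
      fun h => funext fun i => by rw [add_right_comm, add_assoc]
    rw [divDiff, hshift, hshift, ih (k + 1) (hupper ▸ hy.mono (by simp)),
      ih k (hlower ▸ hy.mono (by simp)), hupper, hlower,
      symmDivDiff_erase_sub_symmDivDiff_erase s y g hy hk hkn, add_zero, ← add_assoc,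
      mul_div_cancel_left₀]
    exact sub_ne_zero.mpr fun h => absurd (hy hkn hk h) (by omega)

theorem divDiff_eq_symmDivDiff (y g : ℕ → K) (n : ℕ) (hy : Set.InjOn y (range (n + 1))) :
    divDiff n y g = symmDivDiff (range (n + 1)) y g := by
  have h := divDiff_shift_eq_symmDivDiff y g n 0 (by rwa [zero_add, ← range_eq_Ico])
  simpa only [zero_add, ← range_eq_Ico] using h

end DividedDifference

section Geometric

variable {f : ℝ → ℝ} (hf : ∀ t : ℝ, 0 < t → 0 < f t)
include hf

theorem gDD_pos {n : ℕ} {x : ℕ → ℝ} (hx : ∀ i ≤ n, 0 < x i) : 0 < gDD f n x := by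
  induction n generalizing x with
  | zero => exact hf _ (hx 0 le_rfl)
  | succ n ih =>
    exact Real.rpow_pos_of_pos
      (div_pos (ih fun i hi => hx (i + 1) (by omega)) (ih fun i hi => hx i (by omega))) _

theorem log_gDD {n : ℕ} {x : ℕ → ℝ} (hx : ∀ i ≤ n, 0 < x i) :
    Real.log (gDD f n x) = divDiff n (fun i => Real.log (x i)) (fun i => Real.log (f (x i))) := by
  induction n generalizing x with
  | zero => rfl
  | succ n ih =>
    have hx_succ : ∀ i ≤ n, 0 < x (i + 1) := fun i hi => hx (i + 1) (by omega)
    have hx_le : ∀ i ≤ n, 0 < x i := fun i hi => hx i (by omega)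
    rw [gDD, divDiff, Real.log_rpow (div_pos (gDD_pos hf hx_succ) (gDD_pos hf hx_le)),
      Real.log_div (gDD_pos hf hx_succ).ne' (gDD_pos hf hx_le).ne', ih hx_succ, ih hx_le,
      one_div_mul_eq_div]

end Geometric

/-- Symmetric product formula for geometric divided differences:
`D(x₀,…,x_n) = ∏_{i=0}^n f (x i) ^ (1 / ∏_{j ≠ i} (ln x_i - ln x_j))`;
in particular the `n`-th geometric divided difference is symmetric in its arguments. -/
theorem geometric_divided_difference_symmetric_product
    (f : ℝ → ℝ) (hf : ∀ t : ℝ, 0 < t → 0 < f t) (n : ℕ) (x : ℕ → ℝ)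
    (hx : ∀ i ∈ Finset.range (n + 1), 0 < x i)
    (hx' : ∀ i ∈ Finset.range (n + 1), ∀ j ∈ Finset.range (n + 1), i ≠ j →
      Real.log (x i) ≠ Real.log (x j)) :
    gDD f n x
      = ∏ i ∈ Finset.range (n + 1),
          f (x i) ^
            (1 / ∏ j ∈ (Finset.range (n + 1)).erase i, (Real.log (x i) - Real.log (x j))) := by
  have hx_le : ∀ i ≤ n, 0 < x i := fun i hi => hx i (mem_range_succ_iff.mpr hi)
  have hlog_inj : Set.InjOn (fun i => Real.log (x i)) (range (n + 1)) :=
    fun i hi j hj h => by_contra fun hij => hx' i hi j hj hij h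
  calc gDD f n x = Real.exp (Real.log (gDD f n x)) := (Real.exp_log (gDD_pos hf hx_le)).symm
    _ = Real.exp (symmDivDiff (range (n + 1)) (fun i => Real.log (x i))
          (fun i => Real.log (f (x i)))) := by
      rw [log_gDD hf hx_le, divDiff_eq_symmDivDiff _ _ n hlog_inj]
    _ = _ := by
      rw [symmDivDiff, Real.exp_sum]
      refine prod_congr rfl fun i hi => ?_
      rw [Real.rpow_def_of_pos (hf _ (hx i hi)), mul_one_div]
end

section
/- Relation between geometric divided differences and geometric forward differences at geometrically equally spaced nodes: let f be a function from positive reals to positive reals, let x₀ > 0, h > 0 with ln h ≠ 0, and set x_k = x₀·h^k for k = 0, …, n. Then the n-th geometric divided difference equals ∏_{i=0}^{n} f(x₀·h^i)^{ 1 / ∏_{j ≠ i} ((i−j)·ln h) } = ( ∏_{k=0}^{n} f(x₀·h^{n−k})^{(−1)^k·C(n,k)} )^{ 1/(n!·(ln h)^n) }, i.e. f(x₀,…,x_n) = (Δ_G^n f(x₀))^{1/(n!·(ln h)^n)}. -/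
/-!
Since `∏_{j ≠ i} (i - j) = (-1)^(n-i) i! (n-i)!`, the exponent of `f (x₀ * h^i)` on the left is
`(-1)^(n-i) C(n,i) / (n! (ln h)^n)`. Distributing the outer power over the product on the right
and reversing the index `k ↦ n - k` produces exactly the same exponents.
-/

open Finset Nat

theorem prod_range_succ_erase_natCast_sub {R : Type*} [CommRing R] {i n : ℕ} (hi : i ≤ n) :
    ∏ j ∈ (range (n + 1)).erase i, ((i : R) - j) = (-1) ^ (n - i) * i ! * (n - i)! := by
  induction n, hi using Nat.le_induction with
  | base =>
    rw [range_add_one, erase_insert notMem_range_self, prod_range_natCast_sub,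
      ← descFactorial_eq_prod_range, descFactorial_self]
    simp
  | succ n hin ih =>
    rw [range_add_one, erase_insert_of_ne (by omega), prod_insert (by simp), ih,
      Nat.succ_sub hin, factorial_succ, pow_succ]
    push_cast [Nat.cast_sub hin]
    ring

theorem one_div_prod_range_succ_erase_natCast_sub_mul {K : Type*} [Field K] [CharZero K]
    {i n : ℕ} (hi : i ≤ n) (c : K) :
    1 / ∏ j ∈ (range (n + 1)).erase i, (((i : K) - j) * c)
      = (-1) ^ (n - i) * n.choose i / (n ! * c ^ n) := by
  rw [prod_mul_distrib, prod_const, card_erase_of_mem (mem_range.2 (by omega)), card_range,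
    add_tsub_cancel_right, prod_range_succ_erase_natCast_sub hi,
    ← choose_mul_factorial_mul_factorial hi]
  have hchoose : (n.choose i : K) ≠ 0 := by exact_mod_cast (choose_pos hi).ne'
  push_cast
  field_simp
  rw [← pow_mul, pow_mul', neg_one_sq, one_pow]

theorem geometric_divided_difference_eq_forward_difference_general
    (f : ℝ → ℝ) (hf : ∀ t : ℝ, 0 < t → 0 < f t)
    (x₀ h : ℝ) (hx₀ : 0 < x₀) (hh : 0 < h) (n : ℕ) :
    (∏ i ∈ Finset.range (n + 1),
        f (x₀ * h ^ i) ^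
          (1 / ∏ j ∈ (Finset.range (n + 1)).erase i, (((i : ℝ) - (j : ℝ)) * Real.log h)))
      = (∏ k ∈ Finset.range (n + 1),
            f (x₀ * h ^ (n - k)) ^ ((-1 : ℝ) ^ k * (n.choose k : ℝ)))
          ^ (1 / ((n.factorial : ℝ) * (Real.log h) ^ n)) := by
  have hf_nodes (k : ℕ) : 0 ≤ f (x₀ * h ^ k) := (hf _ (by positivity)).le
  rw [← Real.finsetProd_rpow _ _ fun k _ ↦ Real.rpow_nonneg (hf_nodes _) _,
    ← prod_range_reflect]
  refine prod_congr rfl fun i hi ↦ ?_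
  have hin : i ≤ n := Nat.lt_succ_iff.mp (mem_range.mp hi)
  rw [add_tsub_cancel_right, one_div_prod_range_succ_erase_natCast_sub_mul (sub_le n i),
    ← Real.rpow_mul (hf_nodes _), Nat.sub_sub_self hin, choose_symm hin, mul_one_div]

/-- Relation between geometric divided differences and geometric forward differences
at geometrically equally spaced nodes `x_k = x₀ * h^k`: the `n`-th geometric divided
difference equals the `n`-th geometric forward difference raised to the power
`1 / (n! * (ln h)^n)`, i.e. `f(x₀,…,x_n) = (Δ_G^n f (x₀)) ^ (1/(n! * (ln h)^n))`. -/
theorem geometric_divided_difference_eq_forward_difference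
    (f : ℝ → ℝ) (hf : ∀ t : ℝ, 0 < t → 0 < f t)
    (x₀ h : ℝ) (hx₀ : 0 < x₀) (hh : 0 < h) (hlh : Real.log h ≠ 0) (n : ℕ) :
    (∏ i ∈ Finset.range (n + 1),
        f (x₀ * h ^ i) ^
          (1 / ∏ j ∈ (Finset.range (n + 1)).erase i, (((i : ℝ) - (j : ℝ)) * Real.log h)))
      = (∏ k ∈ Finset.range (n + 1),
            f (x₀ * h ^ (n - k)) ^ ((-1 : ℝ) ^ k * (n.choose k : ℝ)))
          ^ (1 / ((n.factorial : ℝ) * (Real.log h) ^ n)) :=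
  geometric_divided_difference_eq_forward_difference_general f hf x₀ h hx₀ hh n
end

section
/- Geometric Newton–Gregory forward interpolation formula for geometric polynomials: let P be a real polynomial with natural degree at most n, let f(x) = exp(P(ln x)) for x > 0, let x₀ > 0 and h > 0 with ln h ≠ 0, and set x_k = x₀·h^k. For x > 0 put u = (ln x − ln x₀)/ln h. Then f(x) = ∏_{k=0}^{n} ( Δ_G^k f(x₀) )^{ u(u−1)⋯(u−k+1) / k! }, where Δ_G^k f(x₀) = ∏_{j=0}^{k} f(x₀·h^{k−j})^{(−1)^j·C(k,j)} is the k-th geometric forward difference (the k = 0 factor being f(x₀)). -/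
/-!
In the coordinate `t = (log x - log x₀) / log h`, `log ∘ f` becomes the real polynomial
`R t = P (log x₀ + t log h)` of degree `≤ n`, the geometric nodes `x₀ hᵏ` become `t = k`, and
geometric differences become exponentials of ordinary forward differences of `R` at `0`.
The theorem is thus `exp` of the classical Newton forward formula
`R u = ∑ₖ Δᵏ R(0) · u(u-1)⋯(u-k+1)/k!`, which holds because both sides are polynomials in `u`
agreeing at every natural number (Gregory–Newton at the nodes, with `Δᵏ R = 0` for `k > n`).
-/

open Finset Polynomial

theorem fwdDiff_iter_eq_sum_neg_one_pow_mul_shift {M R : Type*} [AddCommMonoid M] [Ring R]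
    (h : M) (f : M → R) (n : ℕ) (y : M) :
    (fwdDiff h)^[n] f y
      = ∑ j ∈ range (n + 1), ((-1) ^ j * n.choose j) * f (y + (n - j) • h) := by
  rw [fwdDiff_iter_eq_sum_shift, ← sum_range_reflect]
  refine sum_congr rfl fun j hj => ?_
  have hjn : j ≤ n := Nat.lt_succ_iff.mp (mem_range.mp hj)
  rw [Nat.add_sub_cancel, Nat.sub_sub_self hjn, Nat.choose_symm hjn, zsmul_eq_mul]
  push_cast
  rfl

namespace Polynomial

theorem sum_range_choose_mul_fwdDiff_iter_eq_eval_natCast {R : Type*} [CommRing R] {P : R[X]}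
    {n : ℕ} (hP : P.natDegree ≤ n) (m : ℕ) :
    ∑ k ∈ range (n + 1), (m.choose k : R) * (fwdDiff 1)^[k] P.eval 0 = P.eval (m : R) := by
  have hvanish : ∀ k, n < k → (fwdDiff (1 : R))^[k] P.eval 0 = 0 := fun k hk => by
    rw [fwdDiff_iter_eq_zero_of_degree_lt (hP.trans_lt hk), Pi.zero_apply]
  have hextend : ∑ k ∈ range (n + 1), (m.choose k : R) * (fwdDiff 1)^[k] P.eval 0
      = ∑ k ∈ range (m + n + 1), (m.choose k : R) * (fwdDiff 1)^[k] P.eval 0 :=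
    sum_subset (range_subset_range.2 (by omega)) fun k _ hkn => by
      rw [hvanish k (by simpa using hkn), mul_zero]
  have hshift : P.eval (m : R)
      = ∑ k ∈ range (m + n + 1), (m.choose k : R) * (fwdDiff 1)^[k] P.eval 0 := by
    rw [← sum_subset (range_subset_range.2 (by omega : m + 1 ≤ m + n + 1)) fun k _ hkm => by
      rw [Nat.choose_eq_zero_of_lt (by simpa using hkm), Nat.cast_zero, zero_mul]]
    simpa using shift_eq_sum_fwdDiff_iter (1 : R) P.eval m 0
  rw [hextend, hshift]

theorem eval_eq_sum_fwdDiff_iter_mul_descPochhammer {K : Type*} [Field K] [CharZero K]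
    {P : K[X]} {n : ℕ} (hP : P.natDegree ≤ n) (u : K) :
    P.eval u = ∑ k ∈ range (n + 1),
      (fwdDiff 1)^[k] P.eval 0 * ((descPochhammer K k).eval u / k.factorial) := by
  set Q : K[X] := ∑ k ∈ range (n + 1),
    C ((fwdDiff 1)^[k] P.eval 0 / k.factorial) * descPochhammer K k
  have hQ : ∀ v, Q.eval v = ∑ k ∈ range (n + 1),
      (fwdDiff 1)^[k] P.eval 0 * ((descPochhammer K k).eval v / k.factorial) := fun v => by
    simp only [Q, eval_finsetSum, eval_mul, eval_C]
    exact sum_congr rfl fun k _ => by ring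
  have hPQ : P = Q := by
    refine eq_of_infinite_eval_eq P Q
      ((Set.infinite_range_of_injective Nat.cast_injective).mono ?_)
    rintro _ ⟨m, rfl⟩
    simp only [Set.mem_ofPred_eq, hQ, ← Nat.cast_choose_eq_descPochhammer_div,
      mul_comm ((fwdDiff 1)^[_] P.eval 0)]
    exact (sum_range_choose_mul_fwdDiff_iter_eq_eval_natCast hP m).symm
  rw [← hQ, ← hPQ]

lemma eval_comp_affine_div {K : Type*} [Field K] (P : K[X]) {a b : K} (hb : b ≠ 0) (y : K) :
    (P.comp (C b * X + C a)).eval ((y - a) / b) = P.eval y := by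
  simp only [eval_comp, eval_add, eval_mul, eval_C, eval_X]
  congr 1
  field_simp
  ring

end Polynomial

lemma prod_exp_rpow_eq_exp_fwdDiff_iter (g : ℝ → ℝ) (k : ℕ) :
    ∏ j ∈ range (k + 1), Real.exp (g (k - j : ℕ)) ^ ((-1 : ℝ) ^ j * k.choose j)
      = Real.exp ((fwdDiff 1)^[k] g 0) := by
  simp only [fwdDiff_iter_eq_sum_neg_one_pow_mul_shift, Real.exp_sum, ← Real.exp_mul, zero_add,
    nsmul_eq_mul, mul_one, mul_comm]

theorem geometric_newton_gregory_forward_interpolation_general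
    (n : ℕ) (P : Polynomial ℝ) (hP : P.natDegree ≤ n)
    (f : ℝ → ℝ) (hf : ∀ t : ℝ, f t = Real.exp (P.eval (Real.log t)))
    (x₀ h : ℝ) (hx₀ : 0 < x₀) (hlh : Real.log h ≠ 0)
    (x : ℝ) (u : ℝ) (hu : u = (Real.log x - Real.log x₀) / Real.log h) :
    f x
      = ∏ k ∈ Finset.range (n + 1),
          (∏ j ∈ Finset.range (k + 1),
              f (x₀ * h ^ (k - j)) ^ ((-1 : ℝ) ^ j * (k.choose j : ℝ)))
            ^ ((∏ i ∈ Finset.range k, (u - (i : ℝ))) / (k.factorial : ℝ)) := by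
  set R : ℝ[X] := P.comp (C (Real.log h) * X + C (Real.log x₀))
  have hR : R.natDegree ≤ n :=
    natDegree_comp_le.trans ((Nat.mul_le_mul hP natDegree_linear_le).trans_eq (mul_one n))
  have hfR : ∀ t, f t = Real.exp (R.eval ((Real.log t - Real.log x₀) / Real.log h)) := fun t => by
    rw [hf, eval_comp_affine_div P hlh]
  have hnode : ∀ m : ℕ, f (x₀ * h ^ m) = Real.exp (R.eval m) := fun m => by
    have hh : h ≠ 0 := fun h0 => hlh (by rw [h0, Real.log_zero])
    rw [hfR, Real.log_mul hx₀.ne' (pow_ne_zero m hh), Real.log_pow, add_sub_cancel_left,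
      mul_div_cancel_right₀ _ hlh]
  rw [hfR, ← hu, eval_eq_sum_fwdDiff_iter_mul_descPochhammer hR, Real.exp_sum]
  refine prod_congr rfl fun k _ => ?_
  simp_rw [hnode]
  rw [prod_exp_rpow_eq_exp_fwdDiff_iter (fun t => R.eval t), ← Real.exp_mul, descPochhammer_eval_eq_prod_range]

/-- Geometric Newton–Gregory forward interpolation formula for geometric polynomials:
for `f x = exp (P (ln x))` with `P` of degree at most `n`, nodes `x_k = x₀ * h^k`,
and `u = (ln x - ln x₀)/ln h`, one has
`f x = ∏_{k=0}^n (Δ_G^k f (x₀)) ^ (u(u-1)⋯(u-k+1)/k!)`, where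
`Δ_G^k f (x₀) = ∏_{j=0}^k f (x₀ * h^(k-j)) ^ ((-1)^j * C(k,j))`. -/
theorem geometric_newton_gregory_forward_interpolation
    (n : ℕ) (P : Polynomial ℝ) (hP : P.natDegree ≤ n)
    (f : ℝ → ℝ) (hf : ∀ t : ℝ, f t = Real.exp (P.eval (Real.log t)))
    (x₀ h : ℝ) (hx₀ : 0 < x₀) (hh : 0 < h) (hlh : Real.log h ≠ 0)
    (x : ℝ) (hx : 0 < x) (u : ℝ) (hu : u = (Real.log x - Real.log x₀) / Real.log h) :
    f x
      = ∏ k ∈ Finset.range (n + 1),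
          (∏ j ∈ Finset.range (k + 1),
              f (x₀ * h ^ (k - j)) ^ ((-1 : ℝ) ^ j * (k.choose j : ℝ)))
            ^ ((∏ i ∈ Finset.range k, (u - (i : ℝ))) / (k.factorial : ℝ)) :=
  geometric_newton_gregory_forward_interpolation_general n P hP f hf x₀ h hx₀ hlh x u hu
end
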